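/- For every left ℤG-module K, there is an isomorphism of abelian groups H^1(G, K) ≅ ker(d_2^*) / im(d_1^*), where d_1^*: K → K^{n} is given by d_1^*(k) = (a_1·k − k, …, a_n·k − k) and d_2^*: K^{n} → K is given by d_2^*(k_1, …, k_n) = Σ_{i=1}^n γ_i·k_i. -/

import Mathlib

open scoped TensorProduct

namespace SurfaceNonOr

/-- The single relator `a₁²a₂²⋯aₙ²` of the nonorientable surface group. -/
def rel (n : ℕ) : FreeGroup (Fin n) :=
  (List.ofFn fun i : Fin n => (FreeGroup.of i) ^ 2).prod

/-- The nonorientable surface group `⟨a₁,…,aₙ ∣ a₁²a₂²⋯aₙ²⟩`. -/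
abbrev SurfaceGroup (n : ℕ) := PresentedGroup ({rel n} : Set (FreeGroup (Fin n)))

noncomputable def a {n : ℕ} (i : Fin n) : SurfaceGroup n := PresentedGroup.of i

/-- `r k = a₁²a₂²⋯a_k²`. -/
noncomputable def r {n : ℕ} (k : ℕ) : SurfaceGroup n :=
  ((List.ofFn fun i : Fin n => (a i) ^ 2).take k).prod

/-- The integral group ring `ℤG`. -/
abbrev A (n : ℕ) := MonoidAlgebra ℤ (SurfaceGroup n)

/-- Inclusion of the group in its group ring. -/
noncomputable def j {n : ℕ} : SurfaceGroup n →* A n := MonoidAlgebra.of ℤ (SurfaceGroup n)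

/-- The Fox derivative `∂p/∂aᵢ = r_{i-1}(1 + aᵢ)`. -/
noncomputable def Fa {n : ℕ} (i : Fin n) : A n := j (r i.val) * (1 + j (a i))

abbrev P0 (n : ℕ) := A n
abbrev P1 (n : ℕ) := Fin n → A n
abbrev P2 (n : ℕ) := A n

/-- `d₁ : P₁ → P₀`, `yᵢ ↦ (aᵢ-1)x`. -/
noncomputable def d1 {n : ℕ} : P1 n →ₗ[A n] P0 n where
  toFun f := ∑ s, f s * (j (a s) - 1)
  map_add' f g := by simp [add_mul, Finset.sum_add_distrib]
  map_smul' r f := by simp [Finset.mul_sum, mul_assoc, smul_eq_mul, mul_add]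

/-- `d₂ : P₂ → P₁`, `w ↦ Σᵢ (∂p/∂aᵢ)yᵢ`. -/
noncomputable def d2 {n : ℕ} : P2 n →ₗ[A n] P1 n where
  toFun c := fun s => c * Fa s
  map_add' c c' := by funext s; simp [add_mul]
  map_smul' c c' := by funext s; simp [mul_assoc, smul_eq_mul]

/-- The augmentation `ε : ℤG → ℤ`. -/
noncomputable def aug {n : ℕ} : A n →ₐ[ℤ] ℤ := MonoidAlgebra.lift ℤ ℤ (SurfaceGroup n) 1

/-- A left `ℤG`-module `K`, viewed as an object of `Rep ℤ G` (on the type synonym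
`RestrictScalars ℤ ℤG K`). -/
noncomputable def RepOfModule (n : ℕ) (K : Type) [AddCommGroup K] [Module (A n) K] :
    Rep ℤ (SurfaceGroup n) :=
  @Rep.of ℤ (SurfaceGroup n) _ _ (RestrictScalars ℤ (A n) K) _
    (RestrictScalars.module ℤ (A n) K) (Representation.ofModule K)

/-- The `ℤ`-linear action of an element of `ℤG` on a `ℤG`-module `K`. -/
noncomputable def act {n : ℕ} (K : Type) [AddCommGroup K] [Module (A n) K] (x : A n) :
    K →ₗ[ℤ] K :=
  (DistribSMul.toAddMonoidHom K x).toIntLinearMap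

/-- `d₁* : K → Kⁿ`, `k ↦ (a₁k - k, …, aₙk - k)`. -/
noncomputable def d1star {n : ℕ} (K : Type) [AddCommGroup K] [Module (A n) K] :
    K →ₗ[ℤ] (Fin n → K) :=
  LinearMap.pi fun i => act K (j (a i)) - LinearMap.id

/-- `d₂* : Kⁿ → K`, `(k₁,…,kₙ) ↦ Σᵢ γᵢ kᵢ`. -/
noncomputable def d2star {n : ℕ} (K : Type) [AddCommGroup K] [Module (A n) K] :
    (Fin n → K) →ₗ[ℤ] K :=
  ∑ i : Fin n, (act K (Fa i)).comp (LinearMap.proj i)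

end SurfaceNonOr

/-! A 1-cocycle `f` on `G` is determined by its values on the generators, and by the Fox calculus
it sends the relator `a₁²⋯aₙ²` to `Σ γᵢ f(aᵢ) = d₂*(f(a₁), …, f(aₙ))`; so restriction to the
generators embeds `Z¹(G, K)` into `ker d₂*`. Conversely, for `v ∈ ker d₂*` the assignment
`aᵢ ↦ (vᵢ, aᵢ)` defines a splitting `G → K ⋊ G`, because the relator is sent to `(d₂* v, 1)`, and
the `K`-component of a splitting is a cocycle. Under this bijection the coboundaries
`g ↦ g x - x` correspond to the image of `d₁*`, since these too are determined on generators. -/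

namespace groupCohomology

universe u

variable {k G : Type u} [CommRing k] [Group G] {M : Rep.{u} k G}

theorem cocycles₁_ext_of_closure_eq_top {S : Set G} (hS : Subgroup.closure S = ⊤)
    {f₁ f₂ : cocycles₁ M} (h : ∀ s ∈ S, f₁ s = f₂ s) : f₁ = f₂ := by
  refine cocycles₁_ext fun g => ?_
  induction (hS ▸ Subgroup.mem_top g : g ∈ Subgroup.closure S)
    using Subgroup.closure_induction with
  | mem s hs => exact h s hs
  | one => simp
  | mul x y _ _ hx hy => rw [(mem_cocycles₁_iff f₁).1 f₁.2, (mem_cocycles₁_iff f₂).1 f₂.2, hx, hy]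
  | inv x _ hx =>
    apply (M.ρ.apply_bijective x).injective
    rw [cocycles₁_map_inv, cocycles₁_map_inv, hx]

theorem mem_coboundaries₁_iff_of_closure_eq_top {S : Set G} (hS : Subgroup.closure S = ⊤)
    (f : cocycles₁ M) : ⇑f ∈ coboundaries₁ M ↔ ∃ x : M, ∀ s ∈ S, M.ρ s x - x = f s := by
  constructor
  · rintro ⟨x, hx⟩
    exact ⟨x, fun s _ => by rw [← hx, d₀₁_hom_apply]⟩
  · rintro ⟨x, hx⟩
    have : (⟨(d₀₁ M).hom x, d₀₁_apply_mem_cocycles₁ x⟩ : cocycles₁ M) = f :=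
      cocycles₁_ext_of_closure_eq_top hS fun s hs => by rw [← hx s hs]; rfl
    exact ⟨x, congrArg Subtype.val this⟩

theorem H1π_surjective (M : Rep.{u} k G) : Function.Surjective (H1π M).hom :=
  (ModuleCat.epi_iff_surjective _).1 inferInstance

variable (M) in
def toMulAutMultiplicative : G →* MulAut (Multiplicative M) where
  toFun g :=
    { toFun x := .ofAdd (M.ρ g x.toAdd)
      invFun x := .ofAdd (M.ρ g⁻¹ x.toAdd)
      left_inv x := by simp
      right_inv x := by simp
      map_mul' x y := by simp }
  map_one' := by ext; simp
  map_mul' g h := by ext; simp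

theorem toMulAutMultiplicative_apply (g : G) (x : Multiplicative M) :
    toMulAutMultiplicative M g x = .ofAdd (M.ρ g x.toAdd) := rfl

theorem toAdd_left_map_mul {H : Type*} [Monoid H]
    (ψ : H →* Multiplicative M ⋊[toMulAutMultiplicative M] G) (g h : H) :
    (ψ (g * h)).left.toAdd = M.ρ (ψ g).right (ψ h).left.toAdd + (ψ g).left.toAdd := by
  rw [map_mul, SemidirectProduct.mul_left, toAdd_mul, toMulAutMultiplicative_apply, toAdd_ofAdd,
    add_comm]

theorem toAdd_left_mem_cocycles₁ (ψ : G →* Multiplicative M ⋊[toMulAutMultiplicative M] G)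
    (hψ : ∀ g, (ψ g).right = g) : (fun g => (ψ g).left.toAdd) ∈ cocycles₁ M :=
  (mem_cocycles₁_iff _).2 fun g h => by rw [toAdd_left_map_mul, hψ]

end groupCohomology

namespace SurfaceNonOr

open groupCohomology

variable {n : ℕ} (K : Type) [AddCommGroup K] [Module (A n) K]

theorem d2star_apply (v : Fin n → K) : d2star K v = ∑ i, Fa i • v i := by
  simp [d2star, act]

theorem mk_take_prod_sq (k : ℕ) :
    PresentedGroup.mk _ ((List.ofFn fun i : Fin n => FreeGroup.of i ^ 2).take k).prod = r k := by
  rw [map_list_prod, List.map_take, List.map_ofFn]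
  rfl

variable {K} in
theorem crossedHom_take_prod_sq {c : FreeGroup (Fin n) → K}
    (hc : ∀ g h, c (g * h) = j (PresentedGroup.mk _ g) • c h + c g) {k : ℕ} (hk : k ≤ n) :
    c ((List.ofFn fun i : Fin n => FreeGroup.of i ^ 2).take k).prod
      = ∑ i : Fin n with i.val < k, Fa i • c (FreeGroup.of i) := by
  induction k with
  | zero =>
    have h1 := hc 1 1
    rw [one_mul, map_one, map_one, one_smul, left_eq_add] at h1
    simpa using h1
  | succ m ih =>
    have hm : m < n := hk
    have hsplit : Finset.univ.filter (fun i : Fin n => i.val < m + 1)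
        = insert ⟨m, hm⟩ (Finset.univ.filter fun i : Fin n => i.val < m) := by
      ext i; simp [Fin.ext_iff]; omega
    rw [List.prod_take_succ _ _ (by simpa using hm), hc, ih hm.le, mk_take_prod_sq, hsplit,
      Finset.sum_insert (by simp), List.getElem_ofFn, sq, hc, Fa, mul_smul, add_smul, one_smul]
    exact congrArg (· + _) (congrArg _ (add_comm _ _))

variable {K} in
theorem crossedHom_rel {c : FreeGroup (Fin n) → K}
    (hc : ∀ g h, c (g * h) = j (PresentedGroup.mk _ g) • c h + c g) :
    c (rel n) = d2star K fun i => c (FreeGroup.of i) := by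
  unfold rel
  rw [d2star_apply, ← List.take_of_length_le (List.length_ofFn).le,
    crossedHom_take_prod_sq hc le_rfl]
  simp

theorem d2star_restrict_eq_zero (f : cocycles₁ (RepOfModule n K)) :
    d2star K (fun i => f (a i)) = 0 := by
  have h := crossedHom_rel (K := K) (c := fun w => f (PresentedGroup.mk _ w)) fun g h => by
    rw [map_mul]; exact (mem_cocycles₁_iff _).1 f.2 _ _
  rw [PresentedGroup.one_of_mem (Set.mem_singleton _), cocycles₁_map_one] at h
  exact h.symm

noncomputable def restrictToGenerators :
    cocycles₁ (RepOfModule n K) →+ LinearMap.ker (d2star (n := n) K) where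
  toFun f := ⟨fun i => f (a i), d2star_restrict_eq_zero K f⟩
  map_zero' := rfl
  map_add' _ _ := rfl

theorem restrictToGenerators_injective : Function.Injective (restrictToGenerators (n := n) K) :=
  fun f₁ f₂ h => cocycles₁_ext_of_closure_eq_top (PresentedGroup.closure_range_of _) <| by
    rintro _ ⟨i, rfl⟩
    exact congrFun (congrArg Subtype.val h) i

abbrev Semidirect (n : ℕ) (K : Type) [AddCommGroup K] [Module (A n) K] :=
  Multiplicative (RepOfModule n K) ⋊[toMulAutMultiplicative (RepOfModule n K)] SurfaceGroup n

variable {K}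

theorem lift_rel_eq_one {v : Fin n → K} (hv : d2star K v = 0) :
    FreeGroup.lift (fun i => (⟨.ofAdd (v i), a i⟩ : Semidirect n K)) (rel n) = 1 := by
  set F := FreeGroup.lift fun i => (⟨.ofAdd (v i), a i⟩ : Semidirect n K)
  have hright : SemidirectProduct.rightHom.comp F = PresentedGroup.mk _ :=
    FreeGroup.ext_hom _ _ fun _ => rfl
  have hleft := crossedHom_rel (K := K) (c := fun w => (F w).left.toAdd) fun g h => by
    have hr : (F g).right = PresentedGroup.mk _ g := DFunLike.congr_fun hright g
    exact (toAdd_left_map_mul F g h).trans (by rw [hr]; rfl)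
  refine SemidirectProduct.ext ?_ ?_
  · simp only [F, FreeGroup.lift_apply_of] at hleft
    exact congrArg Multiplicative.ofAdd (hleft.trans hv)
  · exact (DFunLike.congr_fun hright (rel n)).trans (PresentedGroup.one_of_mem rfl)

noncomputable def sectionOfMemKer {v : Fin n → K} (hv : d2star K v = 0) :
    SurfaceGroup n →* Semidirect n K :=
  PresentedGroup.toGroup <| by
    rintro _ rfl
    exact lift_rel_eq_one hv

theorem sectionOfMemKer_a {v : Fin n → K} (hv : d2star K v = 0) (i : Fin n) :
    sectionOfMemKer hv (a i) = ⟨.ofAdd (v i), a i⟩ :=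
  PresentedGroup.toGroup.of _

theorem sectionOfMemKer_right {v : Fin n → K} (hv : d2star K v = 0) (g : SurfaceGroup n) :
    (sectionOfMemKer hv g).right = g :=
  DFunLike.congr_fun
    (PresentedGroup.ext (φ := SemidirectProduct.rightHom.comp (sectionOfMemKer hv)) (ψ := .id _)
      fun i => congrArg SemidirectProduct.right (sectionOfMemKer_a hv i)) g

variable (K)

theorem restrictToGenerators_surjective :
    Function.Surjective (restrictToGenerators (n := n) K) := by
  rintro ⟨v, hv⟩
  rw [LinearMap.mem_ker] at hv
  refine ⟨⟨_, toAdd_left_mem_cocycles₁ _ (sectionOfMemKer_right hv)⟩,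
    Subtype.ext (funext fun i => ?_)⟩
  show (sectionOfMemKer hv (a i)).left.toAdd = v i
  rw [sectionOfMemKer_a]
  rfl

noncomputable def cocyclesEquivKerD2star :
    cocycles₁ (RepOfModule n K) ≃+ LinearMap.ker (d2star (n := n) K) :=
  AddEquiv.ofBijective (restrictToGenerators K)
    ⟨restrictToGenerators_injective K, restrictToGenerators_surjective K⟩

theorem map_ker_H1π :
    (H1π (RepOfModule n K)).hom.toAddMonoidHom.ker.map
        (cocyclesEquivKerD2star K).toAddMonoidHom
      = (Submodule.comap (LinearMap.ker (d2star (n := n) K)).subtype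
          (LinearMap.range (d1star K))).toAddSubgroup := by
  ext y
  obtain ⟨f, rfl⟩ := (cocyclesEquivKerD2star K).surjective y
  rw [AddSubgroup.mem_map_equiv, AddEquiv.symm_apply_apply, AddMonoidHom.mem_ker,
    Submodule.mem_toAddSubgroup, LinearMap.toAddMonoidHom_coe, H1π_eq_zero_iff,
    mem_coboundaries₁_iff_of_closure_eq_top (PresentedGroup.closure_range_of _),
    Submodule.mem_comap, LinearMap.mem_range]
  simp only [Set.forall_mem_range, funext_iff]
  rfl

theorem statement11_general (n : ℕ) (K : Type) [AddCommGroup K] [Module (A n) K] :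
    Nonempty
      (groupCohomology (RepOfModule n K) 1 ≃+
        ↥(LinearMap.ker (d2star K)) ⧸
          Submodule.comap (LinearMap.ker (d2star (n := n) K)).subtype
            (LinearMap.range (d1star K))) :=
  ⟨(QuotientAddGroup.quotientKerEquivOfSurjective _ (H1π_surjective _)).symm.trans
    (QuotientAddGroup.congr _ _ (cocyclesEquivKerD2star K) (map_ker_H1π K))⟩

/-- for every left `ℤG`-module `K`,
`H¹(G,K) ≅ ker(d₂*) / im(d₁*)`. -/
theorem statement11 (n : ℕ) (hn : 2 ≤ n) (K : Type) [AddCommGroup K] [Module (A n) K] :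
    Nonempty
      (groupCohomology (RepOfModule n K) 1 ≃+
        ↥(LinearMap.ker (d2star K)) ⧸
          Submodule.comap (LinearMap.ker (d2star (n := n) K)).subtype
            (LinearMap.range (d1star K))) :=
  statement11_general n K

end SurfaceNonOr
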